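/- If g(s) and s·g(s) both belong to H²(ℂ₊), then for every t ≥ 0 and ε > 0, the function s·g(s)·e^{−st} lies in the closed span of {g(s)e^{−λs} : |λ − t| < ε}. -/

import Mathlib

open MeasureTheory Complex Filter

noncomputable section

/-- Boundary `L²` space of the right half-plane: `L²(iℝ)` parametrized by `y ∈ ℝ`. -/
abbrev L2R := MeasureTheory.Lp ℂ 2 (volume : Measure ℝ)

/-- The Hardy space `H²(ℂ₊)` (boundary values): the closed span of the
reproducing kernels `s ↦ 1/(s + w̄)`, `Re w > 0`, evaluated at `s = iy`. -/
def Hplus : Submodule ℂ L2R :=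
  (Submodule.span ℂ {f : L2R | ∃ w : ℂ, 0 < w.re ∧
    (f : ℝ → ℂ) =ᵐ[volume] fun y : ℝ => (Complex.I * y + (starRingEnd ℂ) w)⁻¹}).topologicalClosure

/-- The model space `K_θ = H²(ℂ₊) ⊖ θ H²(ℂ₊)`, for a boundary symbol `θ`. -/
def KmodP (θ : ℝ → ℂ) : Set L2R :=
  {f | f ∈ Hplus ∧ ∀ h : L2R, h ∈ Hplus →
    ∫ y : ℝ, (starRingEnd ℂ) (θ y * h y) * f y = 0}

/-- `N(g)`: the closed span of `{g e^{-λ s} : 0 ≤ λ ≤ δ}` in `H²(ℂ₊)` (boundary model,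
`s = iy`). -/
def NspanP (δ : ℝ) (g : ℝ → ℂ) : Set L2R :=
  SetLike.coe (Submodule.span ℂ {f : L2R | ∃ lam : ℝ, 0 ≤ lam ∧ lam ≤ δ ∧
    (f : ℝ → ℂ) =ᵐ[volume]
      fun y : ℝ => g y * Complex.exp (-(lam : ℂ) * (Complex.I * y))}).topologicalClosure

/-- `N` is invariant under the adjoint multiplication semigroup `{M(t)^*}_{t ≥ 0}`:
for each `f ∈ N` and `t ≥ 0`, the projection of `e^{ts} f` onto `H²` lies in `N`. -/
def BwdInvP (N : Set L2R) : Prop :=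
  ∀ t : ℝ, 0 ≤ t → ∀ f ∈ N, ∃ n ∈ N, ∀ h : L2R, h ∈ Hplus →
    ∫ y : ℝ, (starRingEnd ℂ) (h y) *
      (Complex.exp ((t : ℂ) * (Complex.I * y)) * f y - n y) = 0

/-! For `0 < h < ε` the difference quotients `h⁻¹ (g e^{-ts} - g e^{-(t+h)s})` lie in the span.
On the boundary `s = iy` they differ from `s g(s) e^{-ts}` by `g(s) e^{-ts} ((1 - e^{-hs})/h - s)`,
which tends to `0` pointwise as `h → 0` and is dominated by `2 |s g(s)|` because
`|1 - e^{iθ}| ≤ |θ|`; dominated convergence in `L²` concludes. -/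

open Topology ENNReal

theorem tendsto_eLpNorm_of_dominated {α ι E : Type*} [MeasurableSpace α] {μ : Measure α}
    [NormedAddCommGroup E] {l : Filter ι} [l.IsCountablyGenerated] {p : ℝ≥0∞}
    (hp0 : p ≠ 0) (hp : p ≠ ∞) {F : ι → α → E} {G : α → ℝ} (hG : MemLp G p μ)
    (hF_meas : ∀ᶠ i in l, AEStronglyMeasurable (F i) μ)
    (h_bound : ∀ᶠ i in l, ∀ᵐ x ∂μ, ‖F i x‖ ≤ G x)
    (h_lim : ∀ᵐ x ∂μ, Tendsto (fun i => F i x) l (𝓝 0)) :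
    Tendsto (fun i => eLpNorm (F i) p μ) l (𝓝 0) := by
  have hp_pos : 0 < p.toReal := ENNReal.toReal_pos hp0 hp
  have h_rpow : Continuous fun r : ℝ≥0∞ => r ^ p.toReal := ENNReal.continuous_rpow_const
  have h_int : Tendsto (fun i => ∫⁻ x, ‖F i x‖ₑ ^ p.toReal ∂μ) l (𝓝 0) := by
    simpa using tendsto_lintegral_filter_of_dominated_convergence' (f := fun _ => 0)
      (fun x => ‖G x‖ₑ ^ p.toReal)
      (hF_meas.mono fun i hi => hi.enorm.pow_const _)
      (h_bound.mono fun i hi => hi.mono fun x hx => by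
        gcongr
        rw [← ofReal_norm, ← ofReal_norm]
        exact ENNReal.ofReal_le_ofReal (hx.trans (Real.le_norm_self _)))
      (lintegral_rpow_enorm_lt_top_of_eLpNorm_lt_top hp0 hp hG.eLpNorm_lt_top).ne
      (h_lim.mono fun x hx => by
        simpa [Function.comp_def, hp_pos] using
          (h_rpow.tendsto _).comp ((continuous_enorm.tendsto _).comp hx))
  simp only [eLpNorm_eq_lintegral_rpow_enorm_toReal hp0 hp]
  simpa [Function.comp_def, hp_pos] using
    ((ENNReal.continuous_rpow_const (y := 1 / p.toReal)).tendsto 0).comp h_int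

theorem norm_exp_neg_ofReal_mul_I_mul (a y : ℝ) : ‖exp (-(a : ℂ) * (I * y))‖ = 1 := by
  rw [show -(a : ℂ) * (I * y) = ((-(a * y) : ℝ) : ℂ) * I by push_cast; ring,
    norm_exp_ofReal_mul_I]

theorem MeasureTheory.MemLp.mul_exp_neg_ofReal_mul_I_mul {p : ℝ≥0∞} {g : ℝ → ℂ}
    (hg : MemLp g p) (a : ℝ) :
    MemLp (fun y : ℝ => g y * exp (-(a : ℂ) * (I * y))) p :=
  hg.of_le (hg.aestronglyMeasurable.mul (by fun_prop))
    (ae_of_all _ fun y => by rw [norm_mul, norm_exp_neg_ofReal_mul_I_mul, mul_one])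

theorem norm_one_sub_exp_div_sub_le (h y : ℝ) :
    ‖(1 - exp (-(h : ℂ) * (I * y))) / h - I * y‖ ≤ 2 * |y| := by
  have h_quot : ‖(1 - exp (-(h : ℂ) * (I * y))) / h‖ ≤ |y| := by
    rcases eq_or_ne h 0 with rfl | hh
    · simp
    rw [norm_div, norm_real, Real.norm_eq_abs, div_le_iff₀ (abs_pos.mpr hh), norm_sub_rev]
    calc ‖exp (-(h : ℂ) * (I * y)) - 1‖ = ‖exp (I * ((-(h * y) : ℝ) : ℂ)) - 1‖ := by
          push_cast; ring_nf
      _ ≤ ‖-(h * y)‖ := Real.norm_exp_I_mul_ofReal_sub_one_le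
      _ = |y| * |h| := by rw [norm_neg, Real.norm_eq_abs, abs_mul, mul_comm]
  calc _ ≤ ‖(1 - exp (-(h : ℂ) * (I * y))) / h‖ + ‖I * (y : ℂ)‖ := norm_sub_le _ _
    _ ≤ |y| + |y| := by
        gcongr
        rw [norm_mul, norm_I, one_mul, norm_real, Real.norm_eq_abs]
    _ = 2 * |y| := by ring

theorem tendsto_one_sub_exp_div (c : ℂ) :
    Tendsto (fun h : ℝ => (1 - exp (-(h : ℂ) * c)) / h) (𝓝[≠] 0) (𝓝 c) := by
  have h_deriv : HasDerivAt (fun h : ℝ => exp (-(h : ℂ) * c)) (-c) 0 := by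
    simpa using (((hasDerivAt_id (0 : ℂ)).neg.mul_const c).cexp).comp_ofReal
  have := (hasDerivAt_iff_tendsto_slope.mp h_deriv).neg
  refine (this.congr fun h => ?_).trans (by rw [neg_neg])
  simp [slope_def_module, div_eq_inv_mul, mul_sub]

theorem tendsto_eLpNorm_mul_one_sub_exp_div_sub {p : ℝ≥0∞} (hp0 : p ≠ 0) (hp : p ≠ ∞)
    {g : ℝ → ℂ} (hg : AEStronglyMeasurable g) (hsg : MemLp (fun y : ℝ => I * y * g y) p)
    (t : ℝ) :
    Tendsto (fun h : ℝ => eLpNorm (fun y : ℝ => g y * exp (-(t : ℂ) * (I * y)) *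
      ((1 - exp (-(h : ℂ) * (I * y))) / h - I * y)) p) (𝓝[≠] 0) (𝓝 0) := by
  refine tendsto_eLpNorm_of_dominated hp0 hp (G := fun y => 2 * ‖I * y * g y‖)
    (hsg.norm.const_mul 2) (Eventually.of_forall fun h => by fun_prop)
    (Eventually.of_forall fun h => ae_of_all _ fun y => ?_)
    (ae_of_all _ fun y => ?_)
  · rw [norm_mul, norm_mul, norm_exp_neg_ofReal_mul_I_mul, mul_one]
    calc _ ≤ ‖g y‖ * (2 * |y|) := by gcongr; exact norm_one_sub_exp_div_sub_le h y
      _ = 2 * ‖I * y * g y‖ := by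
          rw [norm_mul, norm_mul, norm_I, norm_real, Real.norm_eq_abs]; ring
  · simpa using ((tendsto_one_sub_exp_div (I * y)).sub_const (I * y)).const_mul
      (g y * exp (-(t : ℂ) * (I * y)))

theorem tendsto_inv_smul_sub_toLp_mul_exp {p : ℝ≥0∞} [Fact (1 ≤ p)] (hp : p ≠ ∞)
    {g : ℝ → ℂ} (hg : MemLp g p) (hsg : MemLp (fun y : ℝ => I * y * g y) p) (t : ℝ)
    {F : Lp ℂ p (volume : Measure ℝ)}
    (hF : F =ᵐ[volume] fun y : ℝ => I * y * g y * exp (-(t : ℂ) * (I * y))) :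
    Tendsto (fun h : ℝ => (h : ℂ)⁻¹ • ((hg.mul_exp_neg_ofReal_mul_I_mul t).toLp _ -
      (hg.mul_exp_neg_ofReal_mul_I_mul (t + h)).toLp _)) (𝓝[≠] 0) (𝓝 F) := by
  have hp0 : p ≠ 0 := (zero_lt_one.trans_le Fact.out).ne'
  set u : ℝ → Lp ℂ p (volume : Measure ℝ) :=
    fun a => (hg.mul_exp_neg_ofReal_mul_I_mul a).toLp _
  rw [Lp.tendsto_Lp_iff_tendsto_eLpNorm']
  refine (tendsto_eLpNorm_mul_one_sub_exp_div_sub hp0 hp hg.aestronglyMeasurable hsg t).congr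
    fun h => eLpNorm_congr_ae ?_
  filter_upwards [Lp.coeFn_smul (h : ℂ)⁻¹ (u t - u (t + h)), Lp.coeFn_sub (u t) (u (t + h)),
    MemLp.coeFn_toLp (hg.mul_exp_neg_ofReal_mul_I_mul t),
    MemLp.coeFn_toLp (hg.mul_exp_neg_ofReal_mul_I_mul (t + h)), hF]
    with y h_smul h_sub ht hth hFy
  have h_exp_add : exp (-((t + h : ℝ) : ℂ) * (I * y)) =
      exp (-(t : ℂ) * (I * y)) * exp (-(h : ℂ) * (I * y)) := by
    rw [← exp_add]; push_cast; ring_nf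
  rw [Pi.sub_apply, h_smul, Pi.smul_apply, h_sub, Pi.sub_apply, ht, hth, hFy, h_exp_add,
    smul_eq_mul]
  ring

theorem cyclic_stmt14_general (g : ℝ → ℂ)
    (hg : ∃ f : L2R, f ∈ Hplus ∧ (f : ℝ → ℂ) =ᵐ[volume] g)
    (hsg : ∃ f : L2R, f ∈ Hplus ∧
      (f : ℝ → ℂ) =ᵐ[volume] fun y : ℝ => Complex.I * y * g y)
    (t : ℝ) (ε : ℝ) (hε : 0 < ε)
    (F : L2R)
    (hF : (F : ℝ → ℂ) =ᵐ[volume] fun y : ℝ =>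
      Complex.I * y * g y * Complex.exp (-(t : ℂ) * (Complex.I * y))) :
    F ∈ (Submodule.span ℂ {u : L2R | ∃ lam : ℝ, |lam - t| < ε ∧
      (u : ℝ → ℂ) =ᵐ[volume]
        fun y : ℝ => g y * Complex.exp (-(lam : ℂ) * (Complex.I * y))}).topologicalClosure := by
  obtain ⟨fg, -, hfg⟩ := hg
  obtain ⟨fsg, -, hfsg⟩ := hsg
  have hg2 : MemLp g 2 := (Lp.memLp fg).ae_eq hfg
  set S := {u : L2R | ∃ lam : ℝ, |lam - t| < ε ∧
    (u : ℝ → ℂ) =ᵐ[volume] fun y : ℝ => g y * exp (-(lam : ℂ) * (I * y))}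
  have h_mem_S (lam : ℝ) (hlam : |lam - t| < ε) :
      (hg2.mul_exp_neg_ofReal_mul_I_mul lam).toLp _ ∈ Submodule.span ℂ S :=
    Submodule.subset_span ⟨lam, hlam, MemLp.coeFn_toLp _⟩
  have h_lim := tendsto_inv_smul_sub_toLp_mul_exp ENNReal.ofNat_ne_top hg2
    ((Lp.memLp fsg).ae_eq hfsg) t hF
  refine (Submodule.isClosed_topologicalClosure _).mem_of_tendsto
    (h_lim.mono_left (nhdsGT_le_nhdsNE 0)) ?_
  filter_upwards [Ioo_mem_nhdsGT hε] with h hh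
  refine Submodule.le_topologicalClosure _ (Submodule.smul_mem _ _ (Submodule.sub_mem _
    (h_mem_S t (by simpa using hε)) (h_mem_S (t + h) ?_)))
  rw [add_sub_cancel_left, abs_of_pos hh.1]
  exact hh.2

/-- If `g, s·g ∈ H²(ℂ₊)`, then for all `t ≥ 0`, `ε > 0`,
`s g(s) e^{-st}` lies in the closed span of `{g e^{-λ s} : |λ - t| < ε}`. -/
theorem cyclic_stmt14 (g : ℝ → ℂ)
    (hg : ∃ f : L2R, f ∈ Hplus ∧ (f : ℝ → ℂ) =ᵐ[volume] g)
    (hsg : ∃ f : L2R, f ∈ Hplus ∧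
      (f : ℝ → ℂ) =ᵐ[volume] fun y : ℝ => Complex.I * y * g y)
    (t : ℝ) (ht : 0 ≤ t) (ε : ℝ) (hε : 0 < ε)
    (F : L2R)
    (hF : (F : ℝ → ℂ) =ᵐ[volume] fun y : ℝ =>
      Complex.I * y * g y * Complex.exp (-(t : ℂ) * (Complex.I * y))) :
    F ∈ (Submodule.span ℂ {u : L2R | ∃ lam : ℝ, |lam - t| < ε ∧
      (u : ℝ → ℂ) =ᵐ[volume]
        fun y : ℝ => g y * Complex.exp (-(lam : ℂ) * (Complex.I * y))}).topologicalClosure :=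
  cyclic_stmt14_general g hg hsg t ε hε F hF

end
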